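/- arXiv:2005.09333 — 3 statements merged into one kernel-verified Lean document; each statement's English description precedes it below -/
import Mathlib

section
/- The function ψ : [0, T) → (0, 1] implicitly defined by t = (1/2)(1 − ψ²) + (1/2)·ln((1 + ψ²)/2) with ψ(0) = 1 satisfies the ODE ψ' = −ψ^{−1} − ψ^{−3}, and ψ(t) → 0 as t → (1/2)(1 − ln 2). -/
/-!
The formula `t = G(ψ t)`, with `G y = (1 - y²)/2 + log((1 + y²)/2)/2`, says that `ψ` inverts
`G` on `[0, T)`. Since `G' y = -y³/(1 + y²)`, the inverse function rule gives
`ψ' = 1 / G'(ψ) = -ψ⁻¹ - ψ⁻³`; and since `G` is strictly decreasing on `[0, ∞)` with `G 0 = T`,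
`ψ t` must fall below any `ε > 0` once `t > G ε`, so `ψ t → 0` as `t ↑ T`.
-/

open Set Filter Topology

theorem hasDerivAt_of_leftInvOn {ψ g : ℝ → ℝ} {s : Set ℝ} {t g' : ℝ}
    (hinv : LeftInvOn g ψ s) (ht : t ∈ s) (hs : UniqueDiffWithinAt ℝ s t)
    (hψ : DifferentiableAt ℝ ψ t) (hg : HasDerivAt g g' (ψ t)) :
    HasDerivAt ψ g'⁻¹ t := by
  have hcomp : HasDerivWithinAt (g ∘ ψ) (g' * deriv ψ t) s t :=
    (hg.comp t hψ.hasDerivAt).hasDerivWithinAt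
  have hid : HasDerivWithinAt (g ∘ ψ) 1 s t :=
    (hasDerivWithinAt_id t s).congr (fun x hx => hinv hx) (hinv ht)
  rw [inv_eq_of_mul_eq_one_right (hs.eq_deriv s hcomp hid)]
  exact hψ.hasDerivAt

theorem tendsto_nhdsLT_of_leftInvOn {ψ g : ℝ → ℝ} {a b T : ℝ}
    (hg : StrictAntiOn g (Ici a)) (hga : g a = T) (hbT : b < T)
    (hinv : LeftInvOn g ψ (Ico b T)) (hψ : MapsTo ψ (Ico b T) (Ici a)) :
    Tendsto ψ (𝓝[<] T) (𝓝 a) := by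
  have hmem : ∀ c < T, ∀ᶠ x in 𝓝[<] T, x ∈ Ico b T ∧ c < x := fun c hc =>
    Filter.mem_of_superset (Ioo_mem_nhdsLT (max_lt hc hbT))
      fun x hx => ⟨⟨(le_max_right c b).trans hx.1.le, hx.2⟩, (le_max_left c b).trans_lt hx.1⟩
  refine tendsto_order.2 ⟨fun c hc => ?_, fun c hc => ?_⟩
  · filter_upwards [hmem b hbT] with x hx
    exact hc.trans_le (hψ hx.1)
  · have hgc : g c < T := hga ▸ hg (le_refl a) hc.le hc
    filter_upwards [hmem (g c) hgc] with x ⟨hx, hcx⟩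
    rw [← hinv hx] at hcx
    exact (hg.lt_iff_gt (show a ≤ c from hc.le) (hψ hx)).1 hcx

/-- The time at which the shrinking sphere has radius `y`. -/
noncomputable def profileTime (y : ℝ) : ℝ :=
  (1 / 2) * (1 - y ^ 2) + (1 / 2) * Real.log ((1 + y ^ 2) / 2)

theorem hasDerivAt_profileTime (y : ℝ) :
    HasDerivAt profileTime (-y ^ 3 / (1 + y ^ 2)) y := by
  have hy : (1 + y ^ 2) / 2 ≠ 0 := by positivity
  have h := (((hasDerivAt_pow 2 y).const_sub 1).const_mul (1 / 2)).add
    ((((hasDerivAt_pow 2 y).const_add 1).div_const 2).log hy |>.const_mul (1 / 2))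
  refine h.congr_deriv ?_
  field_simp
  ring

theorem profileTime_strictAntiOn : StrictAntiOn profileTime (Ici 0) := by
  refine strictAntiOn_of_deriv_neg (convex_Ici 0)
    (fun y _ => (hasDerivAt_profileTime y).continuousAt.continuousWithinAt) fun y hy => ?_
  rw [interior_Ici, mem_Ioi] at hy
  rw [(hasDerivAt_profileTime y).deriv]
  exact div_neg_of_neg_of_pos (neg_neg_of_pos (by positivity)) (by positivity)

theorem profileTime_zero : profileTime 0 = (1 / 2) * (1 - Real.log 2) := by
  simp only [profileTime, one_div, ne_eq, OfNat.ofNat_ne_zero, not_false_eq_true, zero_pow,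
    sub_zero, mul_one, add_zero, Real.log_inv]
  ring

theorem profileTime_one : profileTime 1 = 0 := by
  norm_num [profileTime]

theorem stmt_4_general (ψ : ℝ → ℝ) (T : ℝ) (hT : T = (1 / 2) * (1 - Real.log 2))
    (hpos : ∀ t ∈ Set.Ico (0 : ℝ) T, 0 < ψ t ∧ ψ t ≤ 1)
    (hdiff : ∀ t ∈ Set.Ico (0 : ℝ) T, DifferentiableAt ℝ ψ t)
    (himpl : ∀ t ∈ Set.Ico (0 : ℝ) T,
      t = (1 / 2) * (1 - (ψ t) ^ 2) + (1 / 2) * Real.log ((1 + (ψ t) ^ 2) / 2)) :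
    (∀ t ∈ Set.Ico (0 : ℝ) T,
      HasDerivAt ψ (-(ψ t)⁻¹ - ((ψ t) ^ 3)⁻¹) t) ∧
    Filter.Tendsto ψ (nhdsWithin T (Set.Iio T)) (nhds 0) := by
  have hinv : LeftInvOn profileTime ψ (Ico 0 T) := fun t ht => (himpl t ht).symm
  have hT0 : profileTime 0 = T := hT ▸ profileTime_zero
  have hTpos : 0 < T := by
    simpa [hT0, profileTime_one] using
      profileTime_strictAntiOn (mem_Ici.2 le_rfl) (mem_Ici.2 zero_le_one) one_pos
  refine ⟨fun t ht => ?_, tendsto_nhdsLT_of_leftInvOn profileTime_strictAntiOn hT0 hTpos hinv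
    fun t ht => (hpos t ht).1.le⟩
  have hψ := hasDerivAt_of_leftInvOn hinv ht (uniqueDiffOn_Ico 0 T t ht) (hdiff t ht)
    (hasDerivAt_profileTime (ψ t))
  have hψ0 := (hpos t ht).1.ne'
  convert hψ using 1
  field_simp
  ring

/-- The self-similar shrinking profile ψ of the unit sphere under the flow with
speed Φ(z) = z + z³, implicitly defined by
t = (1/2)(1 − ψ²) + (1/2)ln((1+ψ²)/2), ψ(0) = 1, satisfies
ψ' = −ψ⁻¹ − ψ⁻³ and ψ(t) → 0 as t → T = (1/2)(1 − ln 2). -/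
theorem stmt_4 (ψ : ℝ → ℝ) (T : ℝ) (hT : T = (1 / 2) * (1 - Real.log 2))
    (hpos : ∀ t ∈ Set.Ico (0 : ℝ) T, 0 < ψ t ∧ ψ t ≤ 1)
    (hinit : ψ 0 = 1)
    (hdiff : ∀ t ∈ Set.Ico (0 : ℝ) T, DifferentiableAt ℝ ψ t)
    (himpl : ∀ t ∈ Set.Ico (0 : ℝ) T,
      t = (1 / 2) * (1 - (ψ t) ^ 2) + (1 / 2) * Real.log ((1 + (ψ t) ^ 2) / 2))
    (hmono : StrictAntiOn ψ (Set.Ico (0 : ℝ) T)) :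
    (∀ t ∈ Set.Ico (0 : ℝ) T,
      HasDerivAt ψ (-(ψ t)⁻¹ - ((ψ t) ^ 3)⁻¹) t) ∧
    Filter.Tendsto ψ (nhdsWithin T (Set.Iio T)) (nhds 0) :=
  stmt_4_general ψ T hT hpos hdiff himpl
end

section
/- Let κ = (κ₁, …, κₙ) ∈ ℝⁿ with all κ_i > 0 and suppose κ_i ≥ ε·κ_j for all i, j, where 0 < ε ≤ 1. Set H = ∑ κ_i and |A⁰|² = ∑ κ_i² − H²/n. Then |A⁰|² ≤ ((n−1)/2)·(1 − ε)²·H². -/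
/-- Pinching estimate: if κᵢ > 0 and κᵢ ≥ ε κⱼ for all i,j with 0 < ε ≤ 1, then
|A⁰|² = ∑κᵢ² − H²/n ≤ ((n−1)/2)(1−ε)²H² where H = ∑κᵢ. -/
theorem stmt_5 (n : ℕ) (hn : 2 ≤ n) (κ : Fin n → ℝ) (ε : ℝ)
    (hε : 0 < ε) (hε1 : ε ≤ 1)
    (hpos : ∀ i, 0 < κ i)
    (hpinch : ∀ i j, κ i ≥ ε * κ j) :
    (∑ i, (κ i) ^ 2) - (∑ i, κ i) ^ 2 / n ≤
      ((n - 1 : ℝ) / 2) * (1 - ε) ^ 2 * (∑ i, κ i) ^ 2 := by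
  have hn0 : (0:ℝ) < n := by
    have : (2:ℝ) ≤ n := by exact_mod_cast hn
    linarith
  set H := ∑ i, κ i with hH
  set S := ∑ i, (κ i)^2 with hS
  have hle : ∀ i, κ i ≤ H := fun i =>
    Finset.single_le_sum (fun j _ => (hpos j).le) (Finset.mem_univ i)
  have pair : ∀ i j, (κ i - κ j)^2 ≤ ((1-ε)*H)^2 := by
    intro i j
    have h1 : κ i - κ j ≤ (1-ε)*H := by
      have := hpinch j i
      nlinarith [hle i, (hpos i).le]
    have h2 : -((1-ε)*H) ≤ κ i - κ j := by
      have := hpinch i j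
      nlinarith [hle j, (hpos j).le]
    exact sq_le_sq' h2 h1
  have inner : ∀ i, ∑ j, (κ i - κ j)^2 = n*(κ i)^2 - 2*(κ i)*H + S := by
    intro i
    rw [show (n:ℝ)*(κ i)^2 = ∑ _j : Fin n, (κ i)^2 by
        rw [Finset.sum_const, Finset.card_univ, Fintype.card_fin, nsmul_eq_mul],
      show 2*(κ i)*H = ∑ j, 2*(κ i)*(κ j) by rw [hH, Finset.mul_sum],
      hS, ← Finset.sum_sub_distrib, ← Finset.sum_add_distrib]
    exact Finset.sum_congr rfl fun j _ => by ring
  have identity : ∑ i, ∑ j, (κ i - κ j)^2 = 2*n*S - 2*H^2 := by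
    have e : ∑ i, ∑ j, (κ i - κ j)^2 = ∑ i, ((n:ℝ)*(κ i)^2 - 2*(κ i)*H + S) :=
      Finset.sum_congr rfl (fun i _ => inner i)
    have c1 : ∑ i, (n:ℝ)*(κ i)^2 = (n:ℝ)*S := by rw [hS, Finset.mul_sum]
    have c2 : ∑ i, 2*(κ i)*H = 2*H*H := by
      rw [show (2:ℝ)*H*H = (2*H)*∑ i, κ i by rw [hH], Finset.mul_sum]
      exact Finset.sum_congr rfl fun i _ => by ring
    have c3 : ∑ _i : Fin n, S = (n:ℝ)*S := by
      rw [Finset.sum_const, Finset.card_univ, Fintype.card_fin, nsmul_eq_mul]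
    rw [e, Finset.sum_add_distrib, Finset.sum_sub_distrib, c1, c2, c3]
    ring
  have bound : ∑ i, ∑ j, (κ i - κ j)^2 ≤ n * ((n-1) * ((1-ε)*H)^2) := by
    have h1 : ∀ i, ∑ j, (κ i - κ j)^2 ≤ (n-1) * ((1-ε)*H)^2 := by
      intro i
      have := Finset.add_sum_erase Finset.univ (fun j => (κ i - κ j)^2)
        (Finset.mem_univ i)
      have h2 : ∑ j ∈ Finset.univ.erase i, (κ i - κ j)^2
          ≤ (n-1) * ((1-ε)*H)^2 := by
        calc ∑ j ∈ Finset.univ.erase i, (κ i - κ j)^2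
            ≤ ∑ _j ∈ Finset.univ.erase i, ((1-ε)*H)^2 :=
              Finset.sum_le_sum (fun j _ => pair i j)
          _ = (n-1) * ((1-ε)*H)^2 := by
              rw [Finset.sum_const, Finset.card_erase_of_mem (Finset.mem_univ i),
                Finset.card_univ, Fintype.card_fin, nsmul_eq_mul]
              have h1 : 1 ≤ n := by omega
              rw [Nat.cast_sub h1, Nat.cast_one]
      calc ∑ j, (κ i - κ j)^2
          = (κ i - κ i)^2 + ∑ j ∈ Finset.univ.erase i, (κ i - κ j)^2 := this.symm
        _ = ∑ j ∈ Finset.univ.erase i, (κ i - κ j)^2 := by simp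
        _ ≤ (n-1) * ((1-ε)*H)^2 := h2
    calc ∑ i, ∑ j, (κ i - κ j)^2
        ≤ ∑ _i : Fin n, (n-1) * ((1-ε)*H)^2 :=
          Finset.sum_le_sum (fun i _ => h1 i)
      _ = n * ((n-1) * ((1-ε)*H)^2) := by
          rw [Finset.sum_const, Finset.card_univ, Fintype.card_fin, nsmul_eq_mul]
  have key : 2*n*S - 2*H^2 ≤ n * ((n-1) * ((1-ε)*H)^2) := identity ▸ bound
  have hdiv : H^2 / n * n = H^2 := div_mul_cancel₀ _ (ne_of_gt hn0)
  nlinarith [key, hdiv, hn0]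
end

section
/- Let n ≥ 2 and let κ₁,…,κₙ be positive reals satisfying κ_i ≥ ε·κ_j for all i, j, where 0 < ε ≤ 1. With H = ∑ κ_i, |A|² = ∑ κ_i², C = ∑ κ_i³, and |A⁰|² = |A|² − H²/n, one has H·C − (|A|²)² ≥ (ε²/n)·H²·|A⁰|². -/
/-- Huisken's pinching estimate: for pinched positive principal curvatures,
H·C − (|A|²)² ≥ (ε²/n)·H²·|A⁰|². -/
theorem stmt_7 (n : ℕ) (hn : 2 ≤ n) (κ : Fin n → ℝ) (ε : ℝ)
    (hε : 0 < ε) (hε1 : ε ≤ 1)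
    (hpos : ∀ i, 0 < κ i)
    (hpinch : ∀ i j, κ i ≥ ε * κ j) :
    (∑ i, κ i) * (∑ i, (κ i) ^ 3) - (∑ i, (κ i) ^ 2) ^ 2 ≥
      (ε ^ 2 / n) * (∑ i, κ i) ^ 2 *
        ((∑ i, (κ i) ^ 2) - (∑ i, κ i) ^ 2 / n) := by
  set S1 := ∑ i, κ i with hS1
  set S2 := ∑ i, (κ i) ^ 2 with hS2
  set S3 := ∑ i, (κ i) ^ 3 with hS3
  have hn0 : (0:ℝ) < (n:ℝ) := by positivity
  set c : ℝ := (ε * S1 / n) ^ 2 with hc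
  -- each κ i ≥ ε S1 / n
  have hlow : ∀ i, ε * S1 / n ≤ κ i := by
    intro i
    rw [div_le_iff₀ hn0]
    calc ε * S1 = ∑ j, ε * κ j := by rw [hS1, Finset.mul_sum]
      _ ≤ ∑ _j : Fin n, κ i := Finset.sum_le_sum fun j _ => hpinch i j
      _ = κ i * n := by simp [mul_comm]
  have hεS : 0 ≤ ε * S1 / n := by
    have : 0 < S1 := Finset.sum_pos (fun i _ => hpos i) ⟨⟨0, by omega⟩, Finset.mem_univ _⟩
    positivity
  -- termwise nonneg
  have hterm : ∀ i j : Fin n, 0 ≤ (κ i * κ j - c) * (κ i - κ j) ^ 2 := by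
    intro i j
    apply mul_nonneg _ (sq_nonneg _)
    have h1 := hlow i
    have h2 := hlow j
    have : c ≤ κ i * κ j := by
      rw [hc, sq]
      exact mul_le_mul h1 h2 hεS (hpos i).le
    linarith
  have hsum : 0 ≤ ∑ i, ∑ j, (κ i * κ j - c) * (κ i - κ j) ^ 2 :=
    Finset.sum_nonneg fun i _ => Finset.sum_nonneg fun j _ => hterm i j
  -- identity for the double sum
  have hid : ∑ i, ∑ j, (κ i * κ j - c) * (κ i - κ j) ^ 2
      = 2 * (S1 * S3 - S2 ^ 2) - c * (2 * n * S2 - 2 * S1 ^ 2) := by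
    have expand : ∀ i j : Fin n, (κ i * κ j - c) * (κ i - κ j) ^ 2
        = κ i ^ 3 * κ j - 2 * (κ i ^ 2 * κ j ^ 2) + κ i * κ j ^ 3
          - c * κ i ^ 2 + 2 * c * (κ i * κ j) - c * κ j ^ 2 := by
      intro i j; ring
    simp only [expand, Finset.sum_add_distrib, Finset.sum_sub_distrib,
      ← Finset.sum_mul, ← Finset.mul_sum, Finset.sum_const, Finset.card_fin,
      nsmul_eq_mul]
    rw [← hS1, ← hS2, ← hS3]
    ring
  rw [hid] at hsum
  have hc' : c = ε ^ 2 * S1 ^ 2 / n ^ 2 := by rw [hc]; ring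
  rw [hc'] at hsum
  have hn' : ((n:ℝ)) ≠ 0 := ne_of_gt hn0
  have hn2 : (0:ℝ) < (n:ℝ)^2 := by positivity
  rw [sub_nonneg, div_mul_eq_mul_div, div_le_iff₀ hn2] at hsum
  rw [ge_iff_le]
  have hgoal : (ε^2/(n:ℝ))*S1^2*(S2 - S1^2/(n:ℝ)) = ε^2*S1^2*((n:ℝ)*S2 - S1^2)/(n:ℝ)^2 := by
    field_simp
  rw [hgoal, div_le_iff₀ hn2]
  nlinarith [hsum]
end
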